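/- If a bounded signal is a linear image of a signal that persistently spans at most D−1 directions plus arbitrarily small terms, it is not PE: let y : ℕ → ℝ^D be bounded, and suppose for every T ∈ ℕ and ε > 0 there exist t ∈ ℕ, a matrix H ∈ ℝ^{D×(D−1)}, signals λ_τ ∈ ℝ^{D−1}, and e_τ ∈ ℝ^D with |e_τ| ≤ ε, such that y_τ = H λ_τ + e_τ for all τ ∈ {t, …, t+T}. Then y is not persistently exciting. -/

import Mathlib

/-!
A nonzero `z` in the left kernel of `H` sees only the error on the window: `z ⬝ᵥ y τ = z ⬝ᵥ e τ`,
so `(z ⬝ᵥ y τ)² ≤ D ε² (z ⬝ᵥ z)`. Summing over the `T + 1` samples, the Gram quadratic form in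
direction `z` is at most `(T + 1) D ε² (z ⬝ᵥ z)`, which for small `ε` is below the PE bound
`α (z ⬝ᵥ z)`.
-/

open Matrix

noncomputable def gramSum {ι : Type} [Fintype ι] (w : ℕ → ι → ℝ) (t T : ℕ) :
    Matrix ι ι ℝ :=
  ∑ τ ∈ Finset.Icc t (t + T), Matrix.vecMulVec (w τ) (w τ)

/-- Persistency of excitation of a discrete-time signal. -/
def IsPE {ι : Type} [Fintype ι] [DecidableEq ι] (w : ℕ → ι → ℝ) : Prop :=
  ∃ α : ℝ, 0 < α ∧ ∃ T : ℕ, 0 < T ∧ ∀ t : ℕ, (gramSum w t T - α • 1).PosSemidef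

/-- Partial persistency of excitation of degree `D'`: some surjective linear map
makes the signal persistently exciting. -/
def IsPPE {ι : Type} [Fintype ι] [DecidableEq ι] (w : ℕ → ι → ℝ) (D' : ℕ) : Prop :=
  ∃ P : (ι → ℝ) →ₗ[ℝ] (Fin D' → ℝ), Function.Surjective P ∧ IsPE (fun t => P (w t))

/-- The multi-shift stack `Q^k(w)_t = (w_{t-k+1}, …, w_t)` with zero padding. -/
def Qstack (k : ℕ) {d : ℕ} (w : ℕ → Fin d → ℝ) : ℕ → Fin k × Fin d → ℝ :=
  fun t p => if k - 1 - (p.1 : ℕ) ≤ t then w (t - (k - 1 - (p.1 : ℕ))) p.2 else 0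

/-- `A` is Schur: all complex eigenvalues lie strictly inside the unit disc. -/
def IsSchur {n : ℕ} (A : Matrix (Fin n) (Fin n) ℝ) : Prop :=
  ∀ μ : ℂ, μ ∈ spectrum ℂ (A.map (algebraMap ℝ ℂ)) → ‖μ‖ < 1

/-- Reachability of the pair `(A, B)`: the controllability matrix has full row rank. -/
def IsReachable {n m : ℕ} (A : Matrix (Fin n) (Fin n) ℝ)
    (B : Matrix (Fin n) (Fin m) ℝ) : Prop :=
  (Matrix.of fun (i : Fin n) (p : Fin n × Fin m) =>
    ((A ^ (p.1 : ℕ)) * B) i p.2).rank = n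

open Finset

theorem Matrix.exists_ne_zero_vecMul_eq_zero_of_card_lt {m n K : Type*} [Fintype m] [Fintype n]
    [Field K] (H : Matrix m n K) (h : Fintype.card n < Fintype.card m) :
    ∃ z ≠ 0, z ᵥ* H = 0 := by
  have hker := (vecMulLinear H).ker_ne_bot_of_finrank_lt (by simpa using h)
  obtain ⟨z, hz, hz0⟩ := (Submodule.ne_bot_iff _).mp hker
  exact ⟨z, hz0, hz⟩

theorem sq_dotProduct_le_card_mul {ι : Type*} [Fintype ι] (z e : ι → ℝ) :
    (z ⬝ᵥ e) ^ 2 ≤ Fintype.card ι * (z ⬝ᵥ z) * ‖e‖ ^ 2 := by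
  have hee : e ⬝ᵥ e ≤ Fintype.card ι * ‖e‖ ^ 2 := by
    calc e ⬝ᵥ e = ∑ i, ‖e i‖ ^ 2 := by simp [dotProduct, sq]
      _ ≤ ∑ _i : ι, ‖e‖ ^ 2 := sum_le_sum fun i _ => by gcongr; exact norm_le_pi_norm e i
      _ = Fintype.card ι * ‖e‖ ^ 2 := by simp
  calc (z ⬝ᵥ e) ^ 2 ≤ (z ⬝ᵥ z) * (e ⬝ᵥ e) := by
        simpa [dotProduct, sq] using sum_mul_sq_le_sq_mul_sq univ z e
    _ ≤ (z ⬝ᵥ z) * (Fintype.card ι * ‖e‖ ^ 2) := by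
        gcongr; exact dotProduct_self_star_nonneg z
    _ = _ := by ring

theorem dotProduct_gramSum_mulVec {ι : Type} [Fintype ι] (w : ℕ → ι → ℝ) (t T : ℕ)
    (z : ι → ℝ) :
    z ⬝ᵥ gramSum w t T *ᵥ z = ∑ τ ∈ Icc t (t + T), (z ⬝ᵥ w τ) ^ 2 := by
  simp only [gramSum, sum_mulVec, dotProduct_sum, vecMulVec_mulVec, dotProduct_smul]
  refine sum_congr rfl fun τ _ => ?_
  simp [dotProduct_comm, sq]

theorem IsPE.exists_le_sum_sq {ι : Type} [Fintype ι] [DecidableEq ι] {w : ℕ → ι → ℝ}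
    (hw : IsPE w) : ∃ α > 0, ∃ T : ℕ, ∀ t : ℕ, ∀ z : ι → ℝ,
      α * (z ⬝ᵥ z) ≤ ∑ τ ∈ Icc t (t + T), (z ⬝ᵥ w τ) ^ 2 := by
  obtain ⟨α, hα, T, -, hpsd⟩ := hw
  refine ⟨α, hα, T, fun t z => ?_⟩
  have := (hpsd t).dotProduct_mulVec_nonneg z
  simp only [star_trivial, sub_mulVec, dotProduct_sub, smul_mulVec, one_mulVec, dotProduct_smul,
    smul_eq_mul, dotProduct_gramSum_mulVec] at this
  linarith

theorem not_isPE_of_forall_exists_small_projection {ι : Type} [Fintype ι] [DecidableEq ι]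
    {w : ℕ → ι → ℝ}
    (h : ∀ T : ℕ, ∀ δ > 0, ∃ t : ℕ, ∃ z ≠ 0,
      ∀ τ ∈ Icc t (t + T), (z ⬝ᵥ w τ) ^ 2 ≤ δ * (z ⬝ᵥ z)) :
    ¬ IsPE w := by
  intro hw
  obtain ⟨α, hα, T, hbound⟩ := hw.exists_le_sum_sq
  obtain ⟨t, z, hz0, hz⟩ := h T (α / (2 * (T + 1))) (by positivity)
  have hzz : 0 < z ⬝ᵥ z := by simpa using dotProduct_self_star_pos_iff.mpr hz0
  have := calc α * (z ⬝ᵥ z) ≤ ∑ τ ∈ Icc t (t + T), (z ⬝ᵥ w τ) ^ 2 := hbound t z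
    _ ≤ ∑ _τ ∈ Icc t (t + T), α / (2 * (T + 1)) * (z ⬝ᵥ z) := sum_le_sum hz
    _ = α / 2 * (z ⬝ᵥ z) := by
        rw [sum_const, Nat.card_Icc, show t + T + 1 - t = T + 1 by omega, nsmul_eq_mul]
        push_cast; field_simp
  nlinarith

theorem not_pe_of_low_rank_approx_general {D : ℕ} (hD : 0 < D) (y : ℕ → Fin D → ℝ)
    (happrox : ∀ T : ℕ, ∀ ε : ℝ, 0 < ε →
      ∃ t : ℕ, ∃ H : Matrix (Fin D) (Fin (D - 1)) ℝ,
        ∃ lam : ℕ → Fin (D - 1) → ℝ, ∃ e : ℕ → Fin D → ℝ,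
          ∀ τ ∈ Finset.Icc t (t + T), ‖e τ‖ ≤ ε ∧ y τ = H.mulVec (lam τ) + e τ) :
    ¬ IsPE y := by
  refine not_isPE_of_forall_exists_small_projection fun T δ hδ => ?_
  have hDpos : (0 : ℝ) < D := by exact_mod_cast hD
  obtain ⟨t, H, lam, e, hwin⟩ := happrox T √(δ / D) (by positivity)
  obtain ⟨z, hz0, hzH⟩ := H.exists_ne_zero_vecMul_eq_zero_of_card_lt (by simp; omega)
  refine ⟨t, z, hz0, fun τ hτ => ?_⟩
  obtain ⟨he, hy⟩ := hwin τ hτ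
  calc (z ⬝ᵥ y τ) ^ 2 = (z ⬝ᵥ e τ) ^ 2 := by
        rw [hy, dotProduct_add, dotProduct_mulVec, hzH, zero_dotProduct, zero_add]
    _ ≤ D * (z ⬝ᵥ z) * ‖e τ‖ ^ 2 := by simpa using sq_dotProduct_le_card_mul z (e τ)
    _ ≤ D * (z ⬝ᵥ z) * √(δ / D) ^ 2 := by
        have : 0 ≤ z ⬝ᵥ z := dotProduct_self_star_nonneg z
        gcongr
    _ = δ * (z ⬝ᵥ z) := by rw [Real.sq_sqrt (by positivity)]; field_simp

/-- a bounded signal which, on arbitrarily long windows, is a linear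
image of a `(D−1)`-dimensional signal up to arbitrarily small errors, is not PE. -/
theorem not_pe_of_low_rank_approx {D : ℕ} (hD : 0 < D) (y : ℕ → Fin D → ℝ)
    (hbdd : ∃ M : ℝ, ∀ t, ‖y t‖ ≤ M)
    (happrox : ∀ T : ℕ, ∀ ε : ℝ, 0 < ε →
      ∃ t : ℕ, ∃ H : Matrix (Fin D) (Fin (D - 1)) ℝ,
        ∃ lam : ℕ → Fin (D - 1) → ℝ, ∃ e : ℕ → Fin D → ℝ,
          ∀ τ ∈ Finset.Icc t (t + T), ‖e τ‖ ≤ ε ∧ y τ = H.mulVec (lam τ) + e τ) :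
    ¬ IsPE y :=
  not_pe_of_low_rank_approx_general hD y happrox
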